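/- For any positive integers m1,...,m5, the chromatic number of G = K[C5](m1,...,m5) equals max{omega(G), ceil(|V(G)|/2)}, where omega(G) = max over i (mod 5) of (m_i + m_{i+1}) and |V(G)| = m1+m2+m3+m4+m5. -/

import Mathlib

/-!
Lower bound: `V i ∪ V (i + 1)` is a clique, and since each block is a clique and no three vertices
of `C₅` are pairwise non-adjacent, every colour class has at most two vertices.

Upper bound with `k` colours: lay the blocks out in cyclic order as arcs on the circle `ZMod k`,
block `V (i + 1)` starting `ℓ i` steps after `V i`, with `m i ≤ ℓ i ≤ k - m (i + 1)` so that
neighbouring blocks never overlap, and `∑ ℓ i = 2 * k` so that the layout closes up after winding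
twice around the circle. Such `ℓ` exist because `∑ m i ≤ 2 * k ≤ ∑ (k - m (i + 1)) = 5 * k - ∑ m i`.
-/

open SimpleGraph Finset

/-- `G` contains an induced copy of `H`. -/
def HasInducedCopy {V W : Type*} (G : SimpleGraph V) (H : SimpleGraph W) : Prop :=
  ∃ f : W ↪ V, ∀ a b, G.Adj (f a) (f b) ↔ H.Adj a b

/-- The cycle on `ZMod n` (for `n ≥ 3`). -/
def cyc (n : ℕ) : SimpleGraph (ZMod n) where
  Adj i j := i ≠ j ∧ (i = j + 1 ∨ j = i + 1)
  symm := ⟨fun i j h => ⟨h.1.symm, h.2.symm⟩⟩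
  loopless := ⟨fun i h => h.1 rfl⟩

/-- Kite: diamond (K4 minus an edge) plus a pendant vertex adjacent to a degree-3 vertex. -/
def kite : SimpleGraph (Fin 5) :=
  SimpleGraph.fromEdgeSet {s(0,1), s(0,2), s(1,2), s(1,3), s(2,3), s(1,4)}

/-- Bull: triangle with two pendant edges at distinct vertices. -/
def bull : SimpleGraph (Fin 5) :=
  SimpleGraph.fromEdgeSet {s(0,1), s(0,2), s(1,2), s(0,3), s(1,4)}

/-- Independent expansion of the cycle `C_n`. -/
def indExp (n : ℕ) (m : ZMod n → ℕ) : SimpleGraph (Σ i : ZMod n, Fin (m i)) where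
  Adj x y := x.1 ≠ y.1 ∧ (x.1 = y.1 + 1 ∨ y.1 = x.1 + 1)
  symm := ⟨fun x y h => ⟨h.1.symm, h.2.symm⟩⟩
  loopless := ⟨fun x h => h.1 rfl⟩

/-- Complete expansion of the cycle `C_n`. -/
def compExp (n : ℕ) (m : ZMod n → ℕ) : SimpleGraph (Σ i : ZMod n, Fin (m i)) where
  Adj x y := (x.1 = y.1 ∧ x ≠ y) ∨ (x.1 ≠ y.1 ∧ (x.1 = y.1 + 1 ∨ y.1 = x.1 + 1))
  symm := by
    refine ⟨?_⟩
    rintro x y (⟨h, hne⟩ | ⟨h, h2⟩)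
    · exact Or.inl ⟨h.symm, hne.symm⟩
    · exact Or.inr ⟨h.symm, h2.symm⟩
  loopless := by refine ⟨?_⟩; rintro x (⟨_, hne⟩ | ⟨h, _⟩); exacts [hne rfl, h rfl]

/-- Distance from a vertex to a set of vertices. -/
noncomputable def distToSet {V : Type*} (G : SimpleGraph V) (S : Set V) (x : V) : ℕ :=
  sInf ((fun y => G.dist x y) '' S)

namespace Finset

theorem exists_between_sum_eq {ι : Type*} [DecidableEq ι] (s : Finset ι) {lo hi : ι → ℕ}
    (hle : ∀ i, lo i ≤ hi i) {r : ℕ} (hlo : ∑ i ∈ s, lo i ≤ r) (hhi : r ≤ ∑ i ∈ s, hi i) :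
    ∃ ℓ : ι → ℕ, (∀ i, lo i ≤ ℓ i ∧ ℓ i ≤ hi i) ∧ ∑ i ∈ s, ℓ i = r := by
  induction s using Finset.induction_on generalizing r with
  | empty => exact ⟨lo, fun i => ⟨le_rfl, hle i⟩, by simp_all⟩
  | insert a s ha ih =>
    rw [sum_insert ha] at hlo hhi
    have hs : ∑ i ∈ s, lo i ≤ ∑ i ∈ s, hi i := sum_le_sum fun i _ => hle i
    obtain ⟨t, ht⟩ : ∃ t, t = max (lo a) (r - ∑ i ∈ s, hi i) := ⟨_, rfl⟩
    obtain ⟨ℓ, hℓ, hsum⟩ := ih (r := r - t) (by omega) (by omega)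
    refine ⟨Function.update ℓ a t, fun i => ?_, ?_⟩
    · rcases eq_or_ne i a with rfl | hia
      · simp only [Function.update_self]; have := hle i; omega
      · simpa [Function.update_of_ne hia] using hℓ i
    · rw [sum_insert ha, sum_update_of_notMem ha, Function.update_self, hsum]
      omega

end Finset

namespace ZMod

theorem sum_eq_sum_range {n : ℕ} [NeZero n] {M : Type*} [AddCommMonoid M] (f : ZMod n → M) :
    ∑ i, f i = ∑ j ∈ range n, f j :=
  sum_nbij' ZMod.val (↑) (fun i _ => mem_range.2 i.val_lt) (fun _ _ => mem_univ _)
    (fun i _ => natCast_zmod_val i) (fun _ hj => val_cast_of_lt (mem_range.1 hj))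
    (fun i _ => by rw [natCast_zmod_val])

theorem exists_forall_apply_add_one_of_sum_eq_zero {n : ℕ} [NeZero n] {A : Type*}
    [AddCommGroup A] {f : ZMod n → A} (hf : ∑ i, f i = 0) :
    ∃ S : ZMod n → A, ∀ i, S (i + 1) = S i + f i := by
  refine ⟨fun i => ∑ j ∈ range i.val, f j, fun i => ?_⟩
  have hsucc : ∑ j ∈ range (i.val + 1), f j = ∑ j ∈ range i.val, f j + f i := by
    rw [sum_range_succ, natCast_zmod_val]
  have hi1 : i + 1 = ((i.val + 1 : ℕ) : ZMod n) := by push_cast [natCast_zmod_val]; rfl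
  rcases (show i.val + 1 ≤ n from i.val_lt).lt_or_eq with hlt | heq
  · simp only [hi1, val_cast_of_lt hlt, hsucc]
  · simp only [hi1, heq, natCast_self, val_zero, sum_range_zero]
    rw [← hsucc, heq, ← sum_eq_sum_range, hf]

end ZMod

theorem compExp_adj_iff {n : ℕ} {m : ZMod n → ℕ} {x y : Σ i : ZMod n, Fin (m i)} :
    (compExp n m).Adj x y ↔ x ≠ y ∧ (x.1 = y.1 ∨ x.1 = y.1 + 1 ∨ y.1 = x.1 + 1) := by
  constructor
  · rintro (⟨h, hxy⟩ | ⟨h, h'⟩)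
    · exact ⟨hxy, .inl h⟩
    · exact ⟨fun hxy => h (congrArg Sigma.fst hxy), .inr h'⟩
  · rintro ⟨hxy, h | h⟩
    · exact .inl ⟨h, hxy⟩
    · by_cases h' : x.1 = y.1
      · exact .inl ⟨h', hxy⟩
      · exact .inr ⟨h', h⟩

theorem compExp_colorable_of_arcs {n k : ℕ} [NeZero k] {m ℓ : ZMod n → ℕ} {S : ZMod n → ZMod k}
    (hS : ∀ i, S (i + 1) = S i + ℓ i) (hmℓ : ∀ i, m i ≤ ℓ i) (harc : ∀ i, ℓ i + m (i + 1) ≤ k) :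
    (compExp n m).Colorable k := by
  have cast_inj : ∀ {a b : ℕ}, a < k → b < k → (a : ZMod k) = b → a = b := fun ha hb h => by
    rwa [ZMod.natCast_eq_natCast_iff', Nat.mod_eq_of_lt ha, Nat.mod_eq_of_lt hb] at h
  have hm : ∀ i, m i ≤ k := fun i => by have := hmℓ i; have := harc i; omega
  have cross : ∀ i (a : Fin (m i)) (b : Fin (m (i + 1))), S i + a ≠ S (i + 1) + b := by
    intro i a b h
    rw [hS, add_assoc, add_right_inj] at h
    have := hmℓ i
    have := harc i
    have := cast_inj (a := a) (b := ℓ i + b) (by omega) (by omega) (by exact_mod_cast h)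
    omega
  rw [← ZMod.card k]
  refine (Coloring.mk (fun x => S x.1 + x.2) fun {x y} hadj => ?_).colorable
  obtain ⟨i, a⟩ := x
  obtain ⟨j, b⟩ := y
  obtain ⟨hxy, h | h | h⟩ := compExp_adj_iff.1 hadj <;> dsimp only at h <;> subst h
  · intro h
    have := hm i
    exact hxy (congrArg _ (Fin.ext (cast_inj (by omega) (by omega) (add_left_cancel h))))
  · exact (cross j b a).symm
  · exact cross i a b

theorem compExp_colorable {n : ℕ} [NeZero n] (hn : 4 ≤ n) {m : ZMod n → ℕ} {k : ℕ}
    (hpair : ∀ i, m i + m (i + 1) ≤ k) (hsum : ∑ i, m i ≤ 2 * k) :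
    (compExp n m).Colorable k := by
  rcases Nat.eq_zero_or_pos k with rfl | hk
  · exact colorable_zero_iff.2 ⟨fun x => by have := x.2.isLt; have := hpair x.1; omega⟩
  have : NeZero k := ⟨hk.ne'⟩
  have hroom : 2 * k ≤ ∑ i, (k - m (i + 1)) := by
    rw [Fintype.sum_equiv (Equiv.addRight 1) (fun i => k - m (i + 1)) (fun i => k - m i)
        fun _ => rfl,
      sum_tsub_distrib _ fun i _ => by have := hpair i; omega, sum_const, card_univ, ZMod.card,
      smul_eq_mul]
    have : 4 * k ≤ n * k := Nat.mul_le_mul_right k hn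
    omega
  obtain ⟨ℓ, hℓ, hℓsum⟩ := exists_between_sum_eq univ (lo := m) (hi := fun i => k - m (i + 1))
    (fun i => by have := hpair i; omega) hsum hroom
  obtain ⟨S, hS⟩ := ZMod.exists_forall_apply_add_one_of_sum_eq_zero (f := fun i => (ℓ i : ZMod k))
    (by rw [← Nat.cast_sum, hℓsum]; simp)
  exact compExp_colorable_of_arcs hS (fun i => (hℓ i).1)
    fun i => by have := (hℓ i).2; have := hpair i; omega

theorem SimpleGraph.Colorable.compExp_add_le {n : ℕ} [Nontrivial (ZMod n)] {m : ZMod n → ℕ}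
    {c : ℕ} (hc : (compExp n m).Colorable c) (i : ZMod n) : m i + m (i + 1) ≤ c := by
  have hi : i ≠ i + 1 := by simp
  simpa using hc.card_le_of_pairwise_adj
    (Sum.elim (fun a : Fin (m i) => (⟨i, a⟩ : Σ j, Fin (m j))) fun b => ⟨i + 1, b⟩) <| by
    rintro (a | a) (b | b) hab <;> simp only [Sum.elim_inl, Sum.elim_inr, compExp_adj_iff]
    · exact ⟨by simpa using hab, by simp⟩
    · exact ⟨fun h => hi (congrArg Sigma.fst h), by simp⟩
    · exact ⟨fun h => hi (congrArg Sigma.fst h).symm, by simp⟩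
    · exact ⟨by simpa using hab, by simp⟩

theorem SimpleGraph.Colorable.card_le_indepNum_mul {V : Type*} [Fintype V] {G : SimpleGraph V}
    {c : ℕ} (hc : G.Colorable c) : Fintype.card V ≤ G.indepNum * c := by
  classical
  obtain ⟨C⟩ := hc
  simpa using card_le_mul_card_image_of_maps_to (s := univ) (t := univ) (f := C)
    (fun _ _ => mem_univ _) G.indepNum fun b _ => IsIndepSet.card_le_indepNum <| by
      simpa [Coloring.colorClass] using C.isIndepSet_colorClass b

theorem indepNum_compExp_five_le (m : ZMod 5 → ℕ) : (compExp 5 m).indepNum ≤ 2 := by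
  obtain ⟨s, hs⟩ := (compExp 5 m).exists_isNIndepSet_indepNum
  rw [← hs.card_eq]
  by_contra! h
  obtain ⟨x, hx, y, hy, z, hz, hxy, hxz, hyz⟩ := two_lt_card.1 h
  have far : ∀ {u v}, u ∈ s → v ∈ s → u ≠ v → u.1 ≠ v.1 ∧ u.1 ≠ v.1 + 1 ∧ v.1 ≠ u.1 + 1 :=
    fun hu hv huv => by simpa [compExp_adj_iff, huv] using hs.isIndepSet hu hv huv
  have two_close : ∀ i j l : ZMod 5, i = j ∨ i = j + 1 ∨ j = i + 1 ∨ i = l ∨ i = l + 1 ∨ l = i + 1 ∨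
      j = l ∨ j = l + 1 ∨ l = j + 1 := by decide
  have := far hx hy hxy
  have := far hx hz hxz
  have := far hy hz hyz
  have := two_close x.1 y.1 z.1
  tauto

theorem stmt_12_general (m : ZMod 5 → ℕ) :
    (compExp 5 m).chromaticNumber =
      ((max (univ.sup fun i : ZMod 5 => m i + m (i + 1))
        (((∑ i : ZMod 5, m i) + 1) / 2) : ℕ) : ℕ∞) := by
  have hpair : ∀ i, m i + m (i + 1) ≤ univ.sup fun i : ZMod 5 => m i + m (i + 1) :=
    fun i => le_sup (f := fun i : ZMod 5 => m i + m (i + 1)) (mem_univ i)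
  refine le_antisymm (Colorable.chromaticNumber_le <| compExp_colorable (by norm_num)
    (fun i => (hpair i).trans (le_max_left _ _)) (by omega)) ?_
  have : Fact (1 < 5) := ⟨by norm_num⟩
  refine le_chromaticNumber_iff_colorable.2 fun c hc => Nat.cast_le.2 <|
    max_le (Finset.sup_le fun i _ => hc.compExp_add_le i) ?_
  have hcard : ∑ i, m i ≤ 2 * c := by
    simpa [Fintype.card_sigma] using
      hc.card_le_indepNum_mul.trans (Nat.mul_le_mul_right c (indepNum_compExp_five_le m))
  omega

theorem stmt_12 (m : ZMod 5 → ℕ) (hm : ∀ i, 0 < m i) :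
    (compExp 5 m).chromaticNumber =
      ((max (univ.sup fun i : ZMod 5 => m i + m (i + 1))
        (((∑ i : ZMod 5, m i) + 1) / 2) : ℕ) : ℕ∞) :=
  stmt_12_general m
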